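/- Let k be even and let H be a connected k-uniform hypergraph with at least one edge that is not odd-bipartite. If γ : W → ℂ with |γ_w| = 1 for all w is such that L(H) is obtained from Q(H) by the diagonal similarity γ, then γ is necessarily non-real, i.e., γ_w ∉ ℝ for some w ∈ W. The same conclusion holds if −A(H) is obtained from A(H) by the diagonal similarity γ. -/

import Mathlib

open scoped BigOperators

attribute [local instance] Classical.propDecidable

/-- The degree of a vertex `w` in the hypergraph with edge set `E`. -/
def hypDegree {W : Type*} [DecidableEq W] (E : Finset (Finset W)) (w : W) : ℕ :=
  (E.filter fun e => w ∈ e).card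

/-- Entry of the adjacency tensor of the hypergraph with edge set `E` at the tuple `t`. -/
noncomputable def adjEnt {W : Type*} [Fintype W] [DecidableEq W] (k : ℕ)
    (E : Finset (Finset W)) (t : Fin k → W) : ℂ :=
  if Function.Injective t ∧ Finset.image t Finset.univ ∈ E then
    ((Nat.factorial (k - 1) : ℂ))⁻¹
  else 0

/-- Entry of the degree diagonal tensor of the hypergraph with edge set `E` at the tuple
`t`. -/
noncomputable def diagEnt {W : Type*} [Fintype W] [DecidableEq W] (k : ℕ)
    (E : Finset (Finset W)) (t : Fin k → W) : ℂ :=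
  if h : ∃ w : W, ∀ i, t i = w then (hypDegree E h.choose : ℂ) else 0

/-! If every `γ_w` is real, then `γ_w = ±1`, so `γ_w⁻¹ ^ (k - 1) = γ_w` as `k - 1` is odd.
Evaluating the similarity at an enumeration of an edge `e`, where the adjacency entry is nonzero
and the diagonal entry vanishes, gives `∏_{w ∈ e} γ_w = -1`. Hence every edge meets
`{w | γ_w = -1}` in an odd number of vertices; since edges have even size, this set and its
complement are nonempty, so `H` would be odd-bipartite. -/

open Finset

lemma Complex.eq_one_or_eq_neg_one_of_norm_eq_one_of_im_eq_zero {z : ℂ} (hnorm : ‖z‖ = 1)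
    (him : z.im = 0) : z = 1 ∨ z = -1 := by
  have hre : |z.re| = 1 := (Complex.abs_re_eq_norm.mpr him).trans hnorm
  simpa [Complex.ext_iff, him] using abs_eq_abs.mp (hre.trans abs_one.symm)

lemma inv_pow_eq_self_of_odd {R : Type*} [DivisionRing R] {z : R} (hz : z = 1 ∨ z = -1)
    {n : ℕ} (hn : Odd n) : z⁻¹ ^ n = z := by
  rcases hz with rfl | rfl
  · simp
  · rw [inv_neg, inv_one, hn.neg_one_pow]

lemma Finset.prod_eq_neg_one_pow_card_filter {ι R : Type*} [CommRing R] {s : Finset ι}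
    {f : ι → R} (hf : ∀ i ∈ s, f i = 1 ∨ f i = -1) :
    ∏ i ∈ s, f i = (-1) ^ (s.filter (f · = -1)).card := by
  rw [← prod_filter_mul_prod_filter_not s (f · = -1),
    prod_congr rfl fun i hi => (mem_filter.1 hi).2, prod_const,
    prod_eq_one fun i hi => (hf i (mem_filter.1 hi).1).resolve_right (mem_filter.1 hi).2, mul_one]

lemma Finset.exists_injective_image_eq {W : Type*} [DecidableEq W] {s : Finset W} {k : ℕ}
    (hs : s.card = k) : ∃ t : Fin k → W, Function.Injective t ∧ univ.image t = s := by
  refine ⟨fun i => (s.equivFinOfCardEq hs).symm i, fun i j hij =>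
    (s.equivFinOfCardEq hs).symm.injective (Subtype.ext hij), ?_⟩
  ext w
  simp only [mem_image, mem_univ, true_and]
  exact ⟨fun ⟨i, hi⟩ => hi ▸ ((s.equivFinOfCardEq hs).symm i).2,
    fun hw => ⟨s.equivFinOfCardEq hs ⟨w, hw⟩, by simp⟩⟩

section Tensors

variable {W : Type*} [Fintype W] [DecidableEq W] {k : ℕ} {E : Finset (Finset W)}
  {t : Fin k → W}

lemma diagEnt_eq_zero_of_injective (hk : 2 ≤ k) (ht : Function.Injective t) :
    diagEnt k E t = 0 := by
  rw [diagEnt, dif_neg]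
  rintro ⟨w, hw⟩
  have h01 : (⟨0, by omega⟩ : Fin k) ≠ ⟨1, by omega⟩ := by simp
  exact h01 (ht ((hw _).trans (hw _).symm))

lemma adjEnt_of_injective_of_image_mem (ht : Function.Injective t) (hE : univ.image t ∈ E) :
    adjEnt k E t = ((k - 1).factorial : ℂ)⁻¹ := by
  rw [adjEnt, if_pos ⟨ht, hE⟩]

variable (k E) in
def AdjNegSimilarOnInjective (i₀ : Fin k) (gamma : W → ℂ) : Prop :=
  ∀ t : Fin k → W, Function.Injective t →
    -(adjEnt k E t) =
      (gamma (t i₀))⁻¹ ^ (k - 1) * (adjEnt k E t * ∏ i ∈ univ.erase i₀, gamma (t i))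

lemma prod_eq_neg_one_of_adjNegSimilarOnInjective (hkeven : Even k) {i₀ : Fin k} {gamma : W → ℂ}
    (hpm : ∀ w, gamma w = 1 ∨ gamma w = -1) (hsim : AdjNegSimilarOnInjective k E i₀ gamma)
    {e : Finset W} (he : e ∈ E) (hcard : e.card = k) :
    ∏ w ∈ e, gamma w = -1 := by
  obtain ⟨t, ht, himage⟩ := exists_injective_image_eq hcard
  have hk : 1 ≤ k := i₀.pos
  have h := hsim t ht
  rw [adjEnt_of_injective_of_image_mem ht (himage ▸ he),
    inv_pow_eq_self_of_odd (hpm _) (Nat.Even.sub_odd hk hkeven odd_one)] at h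
  have hc : ((k - 1).factorial : ℂ)⁻¹ ≠ 0 := inv_ne_zero (mod_cast (k - 1).factorial_ne_zero)
  calc ∏ w ∈ e, gamma w = ∏ i, gamma (t i) := by rw [← himage, prod_image ht.injOn]
    _ = gamma (t i₀) * ∏ i ∈ univ.erase i₀, gamma (t i) := (mul_prod_erase _ _ (mem_univ _)).symm
    _ = -1 := mul_left_cancel₀ hc (by linear_combination -h)

end Tensors

lemma odd_card_inter_of_prod_eq_neg_one {W : Type*} [Fintype W] [DecidableEq W] {gamma : W → ℂ}
    (hpm : ∀ w, gamma w = 1 ∨ gamma w = -1) {e : Finset W} (he : ∏ w ∈ e, gamma w = -1) :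
    Odd (e ∩ ({w | gamma w = -1} : Finset W)).card := by
  have h := prod_eq_neg_one_pow_card_filter fun w (_ : w ∈ e) => hpm w
  rw [he, eq_comm, neg_one_pow_eq_neg_one_iff_odd (by norm_num)] at h
  rwa [inter_filter, inter_univ]

lemma nonempty_and_compl_nonempty_of_odd_card_inter {W : Type*} [Fintype W] [DecidableEq W]
    {e W₁ : Finset W} (he : Even e.card) (hodd : Odd (e ∩ W₁).card) :
    W₁.Nonempty ∧ W₁ᶜ.Nonempty := by
  refine ⟨(card_pos.mp hodd.pos).mono inter_subset_right, ?_⟩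
  rw [nonempty_iff_ne_empty, Ne, compl_eq_empty_iff]
  rintro rfl
  rw [inter_univ] at hodd
  exact Nat.not_even_iff_odd.mpr hodd he

lemma exists_im_ne_zero_of_adjNegSimilarOnInjective {W : Type*} [Fintype W] [DecidableEq W]
    {k : ℕ} (hkeven : Even k) {E : Finset (Finset W)} (hunif : ∀ e ∈ E, e.card = k)
    (hedge : E.Nonempty)
    (hnob : ¬ ∃ W₁ : Finset W, W₁.Nonempty ∧ W₁ᶜ.Nonempty ∧ ∀ e ∈ E, Odd (e ∩ W₁).card)
    {i₀ : Fin k} {gamma : W → ℂ} (hmod : ∀ w, ‖gamma w‖ = 1)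
    (hsim : AdjNegSimilarOnInjective k E i₀ gamma) :
    ∃ w, (gamma w).im ≠ 0 := by
  by_contra! hreal
  have hpm : ∀ w, gamma w = 1 ∨ gamma w = -1 := fun w =>
    Complex.eq_one_or_eq_neg_one_of_norm_eq_one_of_im_eq_zero (hmod w) (hreal w)
  have hodd : ∀ e ∈ E, Odd (e ∩ ({w | gamma w = -1} : Finset W)).card := fun e he =>
    odd_card_inter_of_prod_eq_neg_one hpm
      (prod_eq_neg_one_of_adjNegSimilarOnInjective hkeven hpm hsim he (hunif e he))
  obtain ⟨e, he⟩ := hedge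
  obtain ⟨hne, hcompl⟩ :=
    nonempty_and_compl_nonempty_of_odd_card_inter (hunif e he ▸ hkeven) (hodd e he)
  exact hnob ⟨_, hne, hcompl, hodd⟩

/-- Let `k` be even and `H` a connected `k`-uniform hypergraph with at least one edge that is
not odd-bipartite.  Any unit-modulus diagonal similarity `γ` taking `Q(H)` to `L(H)`, or taking
`A(H)` to `−A(H)`, is necessarily non-real: `γ_w ∉ ℝ` for some vertex `w`. -/
theorem stmt16 {W : Type*} [Fintype W] [DecidableEq W] (k : ℕ)
    (hk : 2 ≤ k) (hkeven : Even k)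
    (E : Finset (Finset W)) (hunif : ∀ e ∈ E, e.card = k) (hedge : E.Nonempty)
    (hnob : ¬ ∃ W₁ : Finset W, W₁.Nonempty ∧ W₁ᶜ.Nonempty ∧
      ∀ e ∈ E, Odd (e ∩ W₁).card)
    (gamma : W → ℂ) (hmod : ∀ w, ‖gamma w‖ = 1) :
    ((∀ t : Fin k → W,
        diagEnt k E t - adjEnt k E t =
          (gamma (t ⟨0, by omega⟩))⁻¹ ^ (k - 1) *
            ((diagEnt k E t + adjEnt k E t) *
              ∏ i ∈ Finset.univ.erase (⟨0, by omega⟩ : Fin k), gamma (t i))) →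
      ∃ w : W, (gamma w).im ≠ 0) ∧
    ((∀ t : Fin k → W,
        -(adjEnt k E t) =
          (gamma (t ⟨0, by omega⟩))⁻¹ ^ (k - 1) *
            (adjEnt k E t *
              ∏ i ∈ Finset.univ.erase (⟨0, by omega⟩ : Fin k), gamma (t i))) →
      ∃ w : W, (gamma w).im ≠ 0) := by
  have key := exists_im_ne_zero_of_adjNegSimilarOnInjective (i₀ := ⟨0, by omega⟩)
    hkeven hunif hedge hnob hmod
  refine ⟨fun hsim => key fun t ht => ?_, fun hsim => key fun t _ => hsim t⟩
  -- the diagonal tensor vanishes off the constant tuples, so `L = Q` reduces to `-A = A` there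
  simpa [diagEnt_eq_zero_of_injective hk ht] using hsim t
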